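/- arXiv:1905.11647 — 2 statements merged into one kernel-verified Lean document; each statement's English description precedes it below -/
import Mathlib

section
/- Let J, H be bounded operators on a complex Hilbert space with J* = −J = J⁻¹ and H self-adjoint. Suppose λ ∈ iℝ \ {0} is an eigenvalue of J H with eigenvector f and that ⟨H f, f⟩ = 0. Then ⟨J⁻¹ f, f⟩ = 0, i.e. the Fredholm solvability condition for the generalized eigenvector equation J H g = λ g + f is satisfied. -/
theorem ContinuousLinearMap.apply_eq_smul_apply_of_comp_eq_id {R M : Type*} [Semiring R]
    [TopologicalSpace M] [AddCommMonoid M] [Module R M] {J Jinv : M →L[R] M}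
    (hJinv : Jinv.comp J = ContinuousLinearMap.id R M) {x y : M} {c : R} (h : J x = c • y) :
    x = c • Jinv y := by
  calc x = Jinv (J x) := by rw [← ContinuousLinearMap.comp_apply, hJinv, id_apply]
    _ = c • Jinv y := by rw [h, map_smul]

theorem inner_apply_eq_conj_mul_inner_inv_apply {E : Type*} [NormedAddCommGroup E]
    [InnerProductSpace ℂ E] {J H Jinv : E →L[ℂ] E}
    (hJinv : Jinv.comp J = ContinuousLinearMap.id ℂ E) {f : E} {lam : ℂ}
    (heig : J (H f) = lam • f) :
    inner ℂ (H f) f = starRingEnd ℂ lam * inner ℂ (Jinv f) f := by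
  rw [ContinuousLinearMap.apply_eq_smul_apply_of_comp_eq_id hJinv heig, inner_smul_left]

theorem fredholm_condition_for_jordan_block_general
    {E : Type*} [NormedAddCommGroup E] [InnerProductSpace ℂ E]
    (J H Jinv : E →L[ℂ] E)
    (hJinv₁ : Jinv.comp J = ContinuousLinearMap.id ℂ E)
    (f : E) (lam : ℂ) (hlam₀ : lam ≠ 0)
    (heig : J (H f) = lam • f)
    (hK : (inner ℂ (H f) f : ℂ) = 0) :
    (inner ℂ (Jinv f) f : ℂ) = 0 := by
  rw [inner_apply_eq_conj_mul_inner_inv_apply hJinv₁ heig] at hK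
  exact (mul_eq_zero.mp hK).resolve_left ((map_ne_zero _).mpr hlam₀)

/-- Fredholm solvability condition for the generalized eigenvector equation: if
`J* = -J = J⁻¹`, `H` self-adjoint, `λ ∈ iℝ \ {0}` is an eigenvalue of `J H` with
eigenvector `f`, and the Krein quantity vanishes, `⟨H f, f⟩ = 0`, then
`⟨J⁻¹ f, f⟩ = 0`. -/
theorem fredholm_condition_for_jordan_block
    {E : Type*} [NormedAddCommGroup E] [InnerProductSpace ℂ E] [CompleteSpace E]
    (J H Jinv : E →L[ℂ] E)
    (hJskew : ContinuousLinearMap.adjoint J = -J)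
    (hJinv₁ : Jinv.comp J = ContinuousLinearMap.id ℂ E)
    (hJinv₂ : J.comp Jinv = ContinuousLinearMap.id ℂ E)
    (hH : IsSelfAdjoint H)
    (f : E) (hf : f ≠ 0) (lam : ℂ) (hlam₀ : lam ≠ 0) (hlamIm : lam.re = 0)
    (heig : J (H f) = lam • f)
    (hK : (inner ℂ (H f) f : ℂ) = 0) :
    (inner ℂ (Jinv f) f : ℂ) = 0 :=
  fredholm_condition_for_jordan_block_general J H Jinv hJinv₁ f lam hlam₀ heig hK
end

section
/- Let f₀ : ℓ²(ℤ^d,ℝ) × ℝ → ℓ²(ℤ^d,ℝ) be the stationary dNLS map f₀(A,Ω) = ΩA + γ|A|^{2p}A − ΔA, and let f = f₀ + ε f₁ with f₁ a C¹ map bounded together with its derivative uniformly for small ε. If 𝒜 solves f₀(𝒜,Ω) = 0 and the Jacobian J_Ω = Ω + (1+2p)γ|𝒜|^{2p} − Δ is invertible on ℓ²(ℤ^d,ℝ), then there exist ε₁ > 0 and C > 0 such that for all 0 < ε < ε₁ there is a unique solution 𝔄(ε) of f(𝔄,Ω,ε) = 0 with ‖𝔄(ε) − 𝒜‖_{ℓ²}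 ≤ Cε, and the Jacobian of f at 𝔄(ε) differs from J_Ω in operator norm by at most Cε. -/
/-!
Write `f₀ 𝔄 = Ω𝔄 + γ 𝔄^{2p+1} - Δ𝔄` (componentwise, since `|t|^{2p} t = t^{2p+1}`). The linear
parts cancel in `f₀ y - f₀ x - J (y - x)`, which is therefore the componentwise Taylor remainder of
`t ↦ γ t^{2p+1}`; as `ℓ²` embeds in `ℓ^∞`, this shows that `f₀` is differentiable with
`‖Df₀(x) - J‖ = O(‖x - 𝒜‖)`. Hence `f = f₀ + ε f₁` approximates the invertible map `J` on the
ball of radius `Cε` around `𝒜` with constant `O(ε)`, while `‖f 𝒜‖ = O(ε)`; the quantitative inverse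
function theorem then yields a unique zero in that ball, at distance `O(ε)` from `𝒜`, where the
Jacobian is `O(ε)`-close to `J`.
-/

/-- The discrete Laplacian on `ℤ^d` (real values). -/
noncomputable def dLapR {d : ℕ} (u : (Fin d → ℤ) → ℝ) (n : Fin d → ℤ) : ℝ :=
  ∑ i : Fin d,
    (u (Function.update n i (n i + 1)) + u (Function.update n i (n i - 1)) - 2 * u n)

/-- Real `ℓ²(ℤ^d)`. -/
noncomputable abbrev L2ZdR (d : ℕ) := lp (fun _ : Fin d → ℤ => ℝ) 2

open Set Metric Topology Asymptotics
open scoped NNReal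

section Banach

variable {E F : Type*} [NormedAddCommGroup E] [NormedSpace ℝ E]
  [NormedAddCommGroup F] [NormedSpace ℝ F]

theorem hasFDerivAt_of_norm_sub_sub_le_sq {f : E → F} {L : E →L[ℝ] F} {x : E} {K : ℝ}
    (h : ∀ᶠ y in 𝓝 x, ‖f y - f x - L (y - x)‖ ≤ K * ‖y - x‖ ^ 2) : HasFDerivAt f L x :=
  .of_isLittleO <| (IsBigO.of_bound K <| h.mono fun y hy => by simpa using hy).trans_isLittleO
    (isLittleO_pow_sub_sub x one_lt_two)

theorem Convex.approximatesLinearOn_of_norm_fderiv_sub_le {f : E → F} {s : Set E}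
    {φ : E →L[ℝ] F} {c : ℝ≥0} (hs : Convex ℝ s) (hf : ∀ x ∈ s, DifferentiableAt ℝ f x)
    (bound : ∀ x ∈ s, ‖fderiv ℝ f x - φ‖ ≤ c) : ApproximatesLinearOn f φ s c :=
  fun _ hx _ hy => hs.norm_image_sub_le_of_norm_fderiv_le' hf bound hy hx

theorem ApproximatesLinearOn.exists_unique_zero_mem_closedBall [CompleteSpace E]
    {Φ : E → F} {J : E ≃L[ℝ] F} {a : E} {r k : ℝ} {c : ℝ≥0}
    (hΦ : ApproximatesLinearOn Φ (J : E →L[ℝ] F) (closedBall a r) c)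
    (hk : 0 < k) (hJk : ‖(J.symm : F →L[ℝ] E)‖ ≤ k) (hck : 2 * c * k ≤ 1)
    (hr : 2 * k * ‖Φ a‖ ≤ r) :
    ∃ x, Φ x = 0 ∧ ‖x - a‖ ≤ 2 * k * ‖Φ a‖ ∧ ∀ y ∈ closedBall a r, Φ y = 0 → y = x := by
  let Jinv : (J : E →L[ℝ] F).NonlinearRightInverse :=
    { toFun := J.symm
      nnnorm := ⟨k, hk.le⟩
      bound' := (J.symm : F →L[ℝ] E).le_of_opNorm_le hJk
      right_inv' := J.apply_symm_apply }
  have hzero : (0 : F) ∈ closedBall (Φ a) ((k⁻¹ - c) * (2 * k * ‖Φ a‖)) := by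
    rw [mem_closedBall, dist_zero_left]
    have : (k⁻¹ - c) * (2 * k * ‖Φ a‖) = (2 - 2 * c * k) * ‖Φ a‖ := by field_simp
    rw [this]
    nlinarith [norm_nonneg (Φ a)]
  obtain ⟨x, hx, hx0⟩ := (hΦ.mono_set (closedBall_subset_closedBall hr)
    |>.surjOn_closedBall_of_nonlinearRightInverse Jinv (by positivity) subset_rfl) hzero
  refine ⟨x, hx0, mem_closedBall_iff_norm.1 hx, fun y hy hy0 => ?_⟩
  have hxr : x ∈ closedBall a r := closedBall_subset_closedBall hr hx
  have : ‖y - x‖ ≤ 1 / 2 * ‖y - x‖ :=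
    calc ‖y - x‖ = ‖J.symm (J (y - x))‖ := by rw [J.symm_apply_apply]
      _ ≤ k * ‖Φ y - Φ x - J (y - x)‖ := by
          rw [hy0, hx0, sub_zero, zero_sub, norm_neg]
          exact (J.symm : F →L[ℝ] E).le_of_opNorm_le hJk _
      _ ≤ k * (c * ‖y - x‖) := by gcongr; exact hΦ y hy x hxr
      _ ≤ 1 / 2 * ‖y - x‖ := by nlinarith [norm_nonneg (y - x)]
  exact sub_eq_zero.1 (norm_le_zero_iff.1 (by linarith [norm_nonneg (y - x)]))

theorem differentiableAt_add_smul_and_norm_fderiv_sub_le {F₀ G : E → F} {φ : E →L[ℝ] F}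
    {x : E} {β M : ℝ} (ε : ℝ) (hF₀ : DifferentiableAt ℝ F₀ x) (hF₀φ : ‖fderiv ℝ F₀ x - φ‖ ≤ β)
    (hG : DifferentiableAt ℝ G x) (hG' : ‖fderiv ℝ G x‖ ≤ M) :
    DifferentiableAt ℝ (fun y => F₀ y + ε • G y) x ∧
      ‖fderiv ℝ (fun y => F₀ y + ε • G y) x - φ‖ ≤ β + |ε| * M := by
  have hΦ : HasFDerivAt (fun y => F₀ y + ε • G y) (fderiv ℝ F₀ x + ε • fderiv ℝ G x) x :=
    hF₀.hasFDerivAt.add (hG.hasFDerivAt.const_smul ε)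
  refine ⟨hΦ.differentiableAt, ?_⟩
  rw [hΦ.fderiv, add_sub_right_comm, ← Real.norm_eq_abs]
  exact (norm_add_le _ _).trans
    (add_le_add hF₀φ ((norm_smul_le ε _).trans (mul_le_mul_of_nonneg_left hG' (norm_nonneg ε))))

theorem exists_unique_zero_add_smul_of_bounds [CompleteSpace E] {F₀ G : E → F} {J : E ≃L[ℝ] F}
    {a : E} {K M k C ε : ℝ} (hF₀a : F₀ a = 0)
    (hF₀ : ∀ x ∈ closedBall a 1,
      DifferentiableAt ℝ F₀ x ∧ ‖fderiv ℝ F₀ x - (J : E →L[ℝ] F)‖ ≤ K * ‖x - a‖)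
    (hGdiff : Differentiable ℝ G) (hGbdd : ∀ x, ‖G x‖ ≤ M ∧ ‖fderiv ℝ G x‖ ≤ M)
    (hK : 0 ≤ K) (hk : 0 < k) (hJk : ‖(J.symm : F →L[ℝ] E)‖ ≤ k) (hε : 0 < ε)
    (hC₁ : 2 * k * M ≤ C) (hC₂ : K * (2 * k * M) + M ≤ C) (hCε : C * ε ≤ 1)
    (hck : 2 * ((K * C + M) * ε) * k ≤ 1) :
    (∃! x : E, F₀ x + ε • G x = 0 ∧ ‖x - a‖ ≤ C * ε) ∧
      (∀ x : E, F₀ x + ε • G x = 0 → ‖x - a‖ ≤ C * ε →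
        ‖fderiv ℝ (fun y => F₀ y + ε • G y) x - (J : E →L[ℝ] F)‖ ≤ C * ε) := by
  have hM : 0 ≤ M := (norm_nonneg _).trans (hGbdd a).1
  have hC : 0 ≤ C := (by positivity : 0 ≤ 2 * k * M).trans hC₁
  set Φ := fun y => F₀ y + ε • G y
  have hΦ : ∀ x ∈ closedBall a (C * ε), DifferentiableAt ℝ Φ x ∧
      ‖fderiv ℝ Φ x - (J : E →L[ℝ] F)‖ ≤ K * ‖x - a‖ + ε * M := fun x hx => by
    obtain ⟨hF₀x, hF₀J⟩ := hF₀ x (closedBall_subset_closedBall hCε hx)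
    simpa [abs_of_pos hε] using differentiableAt_add_smul_and_norm_fderiv_sub_le ε hF₀x hF₀J
      (hGdiff x) (hGbdd x).2
  have happrox : ApproximatesLinearOn Φ (J : E →L[ℝ] F) (closedBall a (C * ε))
      (⟨(K * C + M) * ε, by positivity⟩ : ℝ≥0) :=
    (convex_closedBall a _).approximatesLinearOn_of_norm_fderiv_sub_le
      (fun x hx => (hΦ x hx).1) fun x hx => (hΦ x hx).2.trans <| by
        have := mem_closedBall_iff_norm.1 hx
        show K * ‖x - a‖ + ε * M ≤ (K * C + M) * ε
        nlinarith
  have hΦa : 2 * k * ‖Φ a‖ ≤ 2 * k * M * ε := by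
    have : ‖Φ a‖ ≤ ε * M := by
      simpa [Φ, hF₀a, norm_smul, abs_of_pos hε] using
        mul_le_mul_of_nonneg_left (hGbdd a).1 hε.le
    nlinarith
  obtain ⟨x, hx0, hxa, huniq⟩ :=
    happrox.exists_unique_zero_mem_closedBall hk hJk hck (hΦa.trans (by nlinarith))
  have hxC : ‖x - a‖ ≤ C * ε := (hxa.trans hΦa).trans (by nlinarith)
  refine ⟨⟨x, ⟨hx0, hxC⟩, fun y hy => huniq y (mem_closedBall_iff_norm.2 hy.2) hy.1⟩,
    fun y hy0 hyC => ?_⟩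
  obtain rfl := huniq y (mem_closedBall_iff_norm.2 hyC) hy0
  calc ‖fderiv ℝ Φ y - (J : E →L[ℝ] F)‖ ≤ K * ‖y - a‖ + ε * M :=
        (hΦ y (mem_closedBall_iff_norm.2 hyC)).2
    _ ≤ K * (2 * k * M * ε) + ε * M := by gcongr; exact hxa.trans hΦa
    _ ≤ C * ε := by nlinarith

theorem exists_unique_zero_of_perturbation [CompleteSpace E]
    (F₀ : E → F) (J : E ≃L[ℝ] F) (a : E) (K : ℝ) (hK : 0 ≤ K) (hF₀a : F₀ a = 0)
    (hF₀ : ∀ x ∈ closedBall a 1,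
      DifferentiableAt ℝ F₀ x ∧ ‖fderiv ℝ F₀ x - (J : E →L[ℝ] F)‖ ≤ K * ‖x - a‖)
    (G : E → ℝ → F) (εbar M : ℝ) (hεbar : 0 < εbar)
    (hGdiff : ∀ ε : ℝ, |ε| ≤ εbar → Differentiable ℝ (fun x => G x ε))
    (hGbdd : ∀ ε : ℝ, |ε| ≤ εbar → ∀ x : E,
      ‖G x ε‖ ≤ M ∧ ‖fderiv ℝ (fun x' => G x' ε) x‖ ≤ M) :
    ∃ ε₁ > 0, ∃ C > 0, ∀ ε : ℝ, 0 < ε → ε < ε₁ →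
      (∃! x : E, F₀ x + ε • G x ε = 0 ∧ ‖x - a‖ ≤ C * ε) ∧
      (∀ x : E, F₀ x + ε • G x ε = 0 → ‖x - a‖ ≤ C * ε →
        ‖fderiv ℝ (fun y => F₀ y + ε • G y ε) x - (J : E →L[ℝ] F)‖ ≤ C * ε) := by
  have hM : 0 ≤ M := (norm_nonneg _).trans (hGbdd 0 (by simpa using hεbar.le) a).1
  set k := ‖(J.symm : F →L[ℝ] E)‖ + 1
  have hk : 0 < k := by positivity
  -- `2kMε` bounds the distance of the zero from `a`, and `(2KkM + M)ε` the Jacobian defect there.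
  set C := 2 * k * M * (K + 1) + M + 1 with hC
  have hC0 : 0 < C := by positivity
  refine ⟨min εbar (1 / (C + 2 * k * (K * C + M))), by positivity, C, hC0,
    fun ε hε hεε₁ => ?_⟩
  obtain ⟨hεbar', hεsmall⟩ := lt_min_iff.1 hεε₁
  rw [lt_div_iff₀ (by positivity)] at hεsmall
  have hεG : |ε| ≤ εbar := (abs_of_pos hε).trans_le hεbar'.le
  exact exists_unique_zero_add_smul_of_bounds hF₀a hF₀ (hGdiff ε hεG) (hGbdd ε hεG) hK hk
    (lt_add_one _).le hε (by nlinarith [mul_nonneg (mul_nonneg hk.le hM) hK]) (by nlinarith)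
    (by nlinarith [mul_nonneg hk.le (add_nonneg (mul_nonneg hK hC0.le) hM)]) (by nlinarith)

end Banach

theorem abs_pow_succ_sub_pow_succ_sub_le {x y S : ℝ} (N : ℕ) (hx : |x| ≤ S) (hy : |y| ≤ S) :
    |y ^ (N + 1) - x ^ (N + 1) - (N + 1) * x ^ N * (y - x)| ≤
      (N + 1) * N * S ^ (N - 1) * |y - x| ^ 2 := by
  have hderiv : ∀ t, HasDerivAt (fun t => t ^ (N + 1) - (N + 1) * x ^ N * t)
      ((N + 1) * (t ^ N - x ^ N)) t := fun t => by
    refine ((hasDerivAt_pow (N + 1) t).sub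
      ((hasDerivAt_id t).const_mul ((N + 1) * x ^ N))).congr_deriv ?_
    simp only [Nat.add_sub_cancel, Nat.cast_add, Nat.cast_one, mul_one]
    ring
  have hbound : ∀ t ∈ uIcc x y, ‖(N + 1 : ℝ) * (t ^ N - x ^ N)‖ ≤
      (N + 1) * N * S ^ (N - 1) * |y - x| := fun t ht => by
    have htS : |t| ≤ S := abs_le.2 (uIcc_subset_Icc (abs_le.1 hx) (abs_le.1 hy) ht)
    calc ‖(N + 1 : ℝ) * (t ^ N - x ^ N)‖ = (N + 1) * |t ^ N - x ^ N| := by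
          rw [Real.norm_eq_abs, abs_mul, abs_of_pos (by positivity)]
      _ ≤ (N + 1) * (|t - x| * N * max |t| |x| ^ (N - 1)) := by
          gcongr; exact abs_pow_sub_pow_le _ _ _
      _ ≤ (N + 1) * (|y - x| * N * S ^ (N - 1)) := by
          gcongr ?_ * (?_ * _ * ?_ ^ _)
          · exact abs_sub_left_of_mem_uIcc ht
          · exact max_le htS hx
      _ = (N + 1) * N * S ^ (N - 1) * |y - x| := by ring
  have := (convex_uIcc x y).norm_image_sub_le_of_norm_hasDerivWithin_le
    (fun t _ => (hderiv t).hasDerivWithinAt) hbound left_mem_uIcc right_mem_uIcc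
  simp only [Real.norm_eq_abs] at this
  convert this using 1
  · congr 1; ring
  · ring

section SequenceSpace

variable {ι : Type*}

local notation "ℓ²" => lp (fun _ : ι => ℝ) 2

theorem lp.abs_apply_le_norm (x : ℓ²) (n : ι) : |x n| ≤ ‖x‖ := by
  simpa using lp.norm_apply_le_norm two_ne_zero x n

theorem lp.norm_le_mul_of_abs_apply_le {x y : ℓ²} {c : ℝ} (hc : 0 ≤ c)
    (h : ∀ n, |x n| ≤ c * |y n|) : ‖x‖ ≤ c * ‖y‖ := by
  rw [← Real.norm_of_nonneg hc, ← norm_smul]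
  refine lp.norm_mono two_ne_zero fun n => ?_
  simpa [abs_of_nonneg hc] using h n

theorem lp.abs_pow_apply_sub_pow_apply_le (x y : ℓ²) (N : ℕ) (n : ι) :
    |x n ^ N - y n ^ N| ≤ ‖x - y‖ * N * max ‖x‖ ‖y‖ ^ (N - 1) :=
  (abs_pow_sub_pow_le _ _ _).trans <| by
    gcongr ?_ * _ * ?_ ^ _
    · simpa using lp.abs_apply_le_norm (x - y) n
    · exact max_le_max (lp.abs_apply_le_norm x n) (lp.abs_apply_le_norm y n)

noncomputable def lp.mulCLM (w : ι → ℝ) {K : ℝ} (hK : 0 ≤ K) (hw : ∀ n, |w n| ≤ K) :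
    ℓ² →L[ℝ] ℓ² :=
  lp.mapCLM 2 (fun n => w n • ContinuousLinearMap.id ℝ ℝ) hK fun n =>
    (norm_smul_le _ _).trans (by simpa using hw n)

@[simp]
theorem lp.mulCLM_apply (w : ι → ℝ) {K : ℝ} (hK : 0 ≤ K) (hw : ∀ n, |w n| ≤ K) (u : ℓ²)
    (n : ι) : lp.mulCLM w hK hw u n = w n * u n := by
  simp [lp.mulCLM]

theorem lp.norm_mulCLM_le (w : ι → ℝ) {K : ℝ} (hK : 0 ≤ K) (hw : ∀ n, |w n| ≤ K) :
    ‖lp.mulCLM w hK hw‖ ≤ K :=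
  lp.norm_mapCLM_le 2 _ hK _

theorem hasFDerivAt_add_mulCLM_of_sub_sub_apply
    {F : ℓ² → ℓ²} {J : ℓ² →L[ℝ] ℓ²} {a : ℓ²} {γ : ℝ} {N : ℕ}
    (hF : ∀ x y (n : ι), (F y - F x - J (y - x)) n =
      γ * (y n ^ (N + 1) - x n ^ (N + 1) - (N + 1) * a n ^ N * (y n - x n)))
    (x : ℓ²) {K : ℝ} (hK : 0 ≤ K) (hw : ∀ n, |(N + 1) * γ * (x n ^ N - a n ^ N)| ≤ K) :
    HasFDerivAt F (J + lp.mulCLM (fun n => (N + 1) * γ * (x n ^ N - a n ^ N)) hK hw) x := by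
  set L := |γ| * ((N + 1) * N * (‖x‖ + 1) ^ (N - 1))
  refine hasFDerivAt_of_norm_sub_sub_le_sq (K := L) ?_
  filter_upwards [ball_mem_nhds x one_pos] with y hy
  have hyS : ‖y‖ ≤ ‖x‖ + 1 := by
    linarith [norm_le_norm_add_norm_sub' y x, mem_ball_iff_norm.1 hy]
  rw [sq, ← mul_assoc]
  refine lp.norm_le_mul_of_abs_apply_le (by positivity) fun n => ?_
  have hyxn : |y n - x n| ≤ ‖y - x‖ := by simpa using lp.abs_apply_le_norm (y - x) n
  calc |(F y - F x - (J + lp.mulCLM _ hK hw) (y - x)) n|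
      = |γ| * |y n ^ (N + 1) - x n ^ (N + 1) - (N + 1) * x n ^ N * (y n - x n)| := by
        rw [← abs_mul]
        congr 1
        have := hF x y n
        simp only [lp.coeFn_sub, Pi.sub_apply, add_apply, lp.coeFn_add, Pi.add_apply,
          lp.mulCLM_apply] at this ⊢
        rw [← sub_sub, this]
        ring
    _ ≤ |γ| * ((N + 1) * N * (‖x‖ + 1) ^ (N - 1) * |y n - x n| ^ 2) := by
        gcongr
        exact abs_pow_succ_sub_pow_succ_sub_le N ((lp.abs_apply_le_norm x n).trans
          (le_add_of_nonneg_right zero_le_one)) ((lp.abs_apply_le_norm y n).trans hyS)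
    _ = L * |y n - x n| * |(y - x) n| := by rw [lp.coeFn_sub, Pi.sub_apply]; ring
    _ ≤ L * ‖y - x‖ * |(y - x) n| := by gcongr

theorem differentiableAt_and_norm_fderiv_sub_le_of_sub_sub_apply
    {F : ℓ² → ℓ²} {J : ℓ² →L[ℝ] ℓ²} {a : ℓ²} {γ : ℝ} {N : ℕ}
    (hF : ∀ x y (n : ι), (F y - F x - J (y - x)) n =
      γ * (y n ^ (N + 1) - x n ^ (N + 1) - (N + 1) * a n ^ N * (y n - x n))) :
    ∀ x ∈ closedBall a 1, DifferentiableAt ℝ F x ∧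
      ‖fderiv ℝ F x - J‖ ≤ (N + 1) * |γ| * N * (‖a‖ + 1) ^ (N - 1) * ‖x - a‖ := by
  intro x hx
  have hxa : ‖x - a‖ ≤ 1 := mem_closedBall_iff_norm.1 hx
  have hmax : max ‖x‖ ‖a‖ ≤ ‖a‖ + 1 :=
    max_le (by linarith [norm_le_norm_add_norm_sub' x a]) (by linarith)
  have hw : ∀ n, |(N + 1) * γ * (x n ^ N - a n ^ N)| ≤
      (N + 1) * |γ| * N * (‖a‖ + 1) ^ (N - 1) * ‖x - a‖ := fun n =>
    calc |(N + 1) * γ * (x n ^ N - a n ^ N)| = (N + 1) * |γ| * |x n ^ N - a n ^ N| := by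
          rw [abs_mul, abs_mul, abs_of_pos (by positivity : (0 : ℝ) < N + 1)]
      _ ≤ (N + 1) * |γ| * (‖x - a‖ * N * (‖a‖ + 1) ^ (N - 1)) := by
          grw [lp.abs_pow_apply_sub_pow_apply_le x a N n, hmax]
      _ = (N + 1) * |γ| * N * (‖a‖ + 1) ^ (N - 1) * ‖x - a‖ := by ring
  have hderiv := hasFDerivAt_add_mulCLM_of_sub_sub_apply hF x (by positivity) hw
  refine ⟨hderiv.differentiableAt, ?_⟩
  rw [hderiv.fderiv, add_sub_cancel_left]
  exact lp.norm_mulCLM_le _ _ _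

end SequenceSpace

theorem dLapR_sub {d : ℕ} (u v : (Fin d → ℤ) → ℝ) (n : Fin d → ℤ) :
    dLapR (fun k => u k - v k) n = dLapR u n - dLapR v n := by
  simp only [dLapR, ← Finset.sum_sub_distrib]
  exact Finset.sum_congr rfl fun _ _ => by ring

theorem dnls_sub_sub_jacobian_apply {d p : ℕ} {γ Ω : ℝ} {f₀ : L2ZdR d → L2ZdR d}
    {J : L2ZdR d →L[ℝ] L2ZdR d} {𝒜 : L2ZdR d}
    (hf₀ : ∀ (A : L2ZdR d) (n : Fin d → ℤ),
      (f₀ A : ∀ _ : Fin d → ℤ, ℝ) n =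
        Ω * (A : ∀ _ : Fin d → ℤ, ℝ) n +
        γ * |(A : ∀ _ : Fin d → ℤ, ℝ) n| ^ (2 * p) * (A : ∀ _ : Fin d → ℤ, ℝ) n -
        dLapR (fun k => (A : ∀ _ : Fin d → ℤ, ℝ) k) n)
    (hJ : ∀ (u : L2ZdR d) (n : Fin d → ℤ),
      (J u : ∀ _ : Fin d → ℤ, ℝ) n =
        Ω * (u : ∀ _ : Fin d → ℤ, ℝ) n +
        ((1 + 2 * p : ℕ) : ℝ) * γ * |(𝒜 : ∀ _ : Fin d → ℤ, ℝ) n| ^ (2 * p) *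
          (u : ∀ _ : Fin d → ℤ, ℝ) n -
        dLapR (fun k => (u : ∀ _ : Fin d → ℤ, ℝ) k) n)
    (A B : L2ZdR d) (n : Fin d → ℤ) :
    (f₀ B - f₀ A - J (B - A)) n = γ * (B n ^ (2 * p + 1) - A n ^ (2 * p + 1) -
      ((2 * p : ℕ) + 1) * 𝒜 n ^ (2 * p) * (B n - A n)) := by
  simp only [lp.coeFn_sub, Pi.sub_apply, hf₀, hJ, dLapR_sub, Even.pow_abs (even_two_mul p)]
  push_cast
  ring

theorem dnls_soliton_persistence_ift_general (d : ℕ) (p : ℕ)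
    (γ Ω : ℝ)
    (f₀ : L2ZdR d → L2ZdR d)
    (hf₀ : ∀ (A : L2ZdR d) (n : Fin d → ℤ),
      (f₀ A : ∀ _ : Fin d → ℤ, ℝ) n =
        Ω * (A : ∀ _ : Fin d → ℤ, ℝ) n +
        γ * |(A : ∀ _ : Fin d → ℤ, ℝ) n| ^ (2 * p) * (A : ∀ _ : Fin d → ℤ, ℝ) n -
        dLapR (fun k => (A : ∀ _ : Fin d → ℤ, ℝ) k) n)
    (f₁ : L2ZdR d → ℝ → L2ZdR d) (εbar M : ℝ) (hεbar : 0 < εbar)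
    (hf₁diff : ∀ ε : ℝ, |ε| ≤ εbar → Differentiable ℝ (fun A => f₁ A ε))
    (hf₁bdd : ∀ ε : ℝ, |ε| ≤ εbar → ∀ A : L2ZdR d,
      ‖f₁ A ε‖ ≤ M ∧ ‖fderiv ℝ (fun A' => f₁ A' ε) A‖ ≤ M)
    (𝒜 : L2ZdR d) (h𝒜 : f₀ 𝒜 = 0)
    (J Jinv : L2ZdR d →L[ℝ] L2ZdR d)
    (hJ : ∀ (u : L2ZdR d) (n : Fin d → ℤ),
      (J u : ∀ _ : Fin d → ℤ, ℝ) n =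
        Ω * (u : ∀ _ : Fin d → ℤ, ℝ) n +
        ((1 + 2 * p : ℕ) : ℝ) * γ * |(𝒜 : ∀ _ : Fin d → ℤ, ℝ) n| ^ (2 * p) *
          (u : ∀ _ : Fin d → ℤ, ℝ) n -
        dLapR (fun k => (u : ∀ _ : Fin d → ℤ, ℝ) k) n)
    (hJinv₁ : Jinv.comp J = ContinuousLinearMap.id ℝ (L2ZdR d))
    (hJinv₂ : J.comp Jinv = ContinuousLinearMap.id ℝ (L2ZdR d)) :
    ∃ ε₁ > 0, ∃ C > 0, ∀ ε : ℝ, 0 < ε → ε < ε₁ →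
      (∃! 𝔄 : L2ZdR d, f₀ 𝔄 + ε • f₁ 𝔄 ε = 0 ∧ ‖𝔄 - 𝒜‖ ≤ C * ε) ∧
      (∀ 𝔄 : L2ZdR d, f₀ 𝔄 + ε • f₁ 𝔄 ε = 0 → ‖𝔄 - 𝒜‖ ≤ C * ε →
        ‖fderiv ℝ (fun A => f₀ A + ε • f₁ A ε) 𝔄 - J‖ ≤ C * ε) :=
  exists_unique_zero_of_perturbation f₀ (.equivOfInverse' J Jinv hJinv₂ hJinv₁) 𝒜 _
    (by positivity) h𝒜
    (differentiableAt_and_norm_fderiv_sub_le_of_sub_sub_apply (dnls_sub_sub_jacobian_apply hf₀ hJ))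
    f₁ εbar M hεbar hf₁diff hf₁bdd

/-- Persistence of the dNLS soliton under the higher-order normal form perturbation:
if `𝒜` solves the stationary dNLS equation `f₀(𝒜,Ω) = Ω𝒜 + γ|𝒜|^{2p}𝒜 - Δ𝒜 = 0`
and the Jacobian `J_Ω = Ω + (1+2p)γ|𝒜|^{2p} - Δ` is invertible, then for
`f = f₀ + ε f₁` with `f₁` C¹ and bounded together with its derivative uniformly for
small `ε`, there are `ε₁ > 0`, `C > 0` such that for `0 < ε < ε₁` there is a unique
solution `𝔄(ε)` of `f(𝔄,Ω,ε) = 0` with `‖𝔄(ε) - 𝒜‖ ≤ Cε`, and the Jacobian of `f`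
at `𝔄(ε)` differs from `J_Ω` in operator norm by at most `Cε`. -/
theorem dnls_soliton_persistence_ift (d : ℕ) (hd : 1 ≤ d) (p : ℕ) (hp : 1 ≤ p)
    (γ Ω : ℝ) (hγ : 0 < γ)
    (f₀ : L2ZdR d → L2ZdR d)
    (hf₀ : ∀ (A : L2ZdR d) (n : Fin d → ℤ),
      (f₀ A : ∀ _ : Fin d → ℤ, ℝ) n =
        Ω * (A : ∀ _ : Fin d → ℤ, ℝ) n +
        γ * |(A : ∀ _ : Fin d → ℤ, ℝ) n| ^ (2 * p) * (A : ∀ _ : Fin d → ℤ, ℝ) n -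
        dLapR (fun k => (A : ∀ _ : Fin d → ℤ, ℝ) k) n)
    (f₁ : L2ZdR d → ℝ → L2ZdR d) (εbar M : ℝ) (hεbar : 0 < εbar) (hM : 0 < M)
    (hf₁diff : ∀ ε : ℝ, |ε| ≤ εbar → Differentiable ℝ (fun A => f₁ A ε))
    (hf₁bdd : ∀ ε : ℝ, |ε| ≤ εbar → ∀ A : L2ZdR d,
      ‖f₁ A ε‖ ≤ M ∧ ‖fderiv ℝ (fun A' => f₁ A' ε) A‖ ≤ M)
    (𝒜 : L2ZdR d) (h𝒜 : f₀ 𝒜 = 0)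
    (J Jinv : L2ZdR d →L[ℝ] L2ZdR d)
    (hJ : ∀ (u : L2ZdR d) (n : Fin d → ℤ),
      (J u : ∀ _ : Fin d → ℤ, ℝ) n =
        Ω * (u : ∀ _ : Fin d → ℤ, ℝ) n +
        ((1 + 2 * p : ℕ) : ℝ) * γ * |(𝒜 : ∀ _ : Fin d → ℤ, ℝ) n| ^ (2 * p) *
          (u : ∀ _ : Fin d → ℤ, ℝ) n -
        dLapR (fun k => (u : ∀ _ : Fin d → ℤ, ℝ) k) n)
    (hJinv₁ : Jinv.comp J = ContinuousLinearMap.id ℝ (L2ZdR d))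
    (hJinv₂ : J.comp Jinv = ContinuousLinearMap.id ℝ (L2ZdR d)) :
    ∃ ε₁ > 0, ∃ C > 0, ∀ ε : ℝ, 0 < ε → ε < ε₁ →
      (∃! 𝔄 : L2ZdR d, f₀ 𝔄 + ε • f₁ 𝔄 ε = 0 ∧ ‖𝔄 - 𝒜‖ ≤ C * ε) ∧
      (∀ 𝔄 : L2ZdR d, f₀ 𝔄 + ε • f₁ 𝔄 ε = 0 → ‖𝔄 - 𝒜‖ ≤ C * ε →
        ‖fderiv ℝ (fun A => f₀ A + ε • f₁ A ε) 𝔄 - J‖ ≤ C * ε) :=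
  dnls_soliton_persistence_ift_general d p γ Ω f₀ hf₀ f₁ εbar M hεbar hf₁diff hf₁bdd 𝒜 h𝒜 J Jinv hJ
    hJinv₁ hJinv₂
end
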